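/- arXiv:1812.02450 — 2 statements merged into one kernel-verified Lean document; each statement's English description precedes it below -/
import Mathlib

section
/- Let (Ω, Σ, μ) be a σ-finite measure space and let f ∈ L¹(μ) with ‖f‖₁ = 1. If the support of f contains an atom A for μ, then f is not a Δ-point: there exists ε > 0 such that f ∉ cl conv{g ∈ B_{L¹(μ)} : ‖f − g‖₁ ≥ 2 − ε}. Concretely, if f = c a.e. on A with c > 0, then any ε with 0 < ε < 2c·μ(A) works, and any convex combination h of elements of Δ_ε(f) satisfies ‖f − h‖₁ ≥ (c − ε/(2μ(A)))·μ(A) > 0. -/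
/-!
Let `φ g = ∫_A g`, a functional of norm at most one on `L¹(μ)`. For `g ∈ Δ_ε(f)`, splitting
`‖f - g‖` over `A` and `Aᶜ` and using `|c - y| ≤ c + |y| - 2 min(c, y)` on `A` gives
`2 ∫_A min(c, g) ≤ ‖f‖ + ‖g‖ - ‖f - g‖ ≤ ε < 2 c μ(A)`. As `A` is an atom, `g < c` then holds
a.e. on `A`, so `φ g = ∫_A min(c, g) ≤ ε / 2`. Hence the closed convex hull of `Δ_ε(f)` lies in the
closed half-space `{φ ≤ ε / 2}`, whereas `φ f = c μ(A)`; and `‖f - h‖ ≥ φ f - φ h`.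
-/

open MeasureTheory

def IsMeasureAtom {Ω : Type*} [MeasurableSpace Ω] (μ : Measure Ω) (A : Set Ω) : Prop :=
  MeasurableSet A ∧ 0 < μ A ∧ μ A < ⊤ ∧
    ∀ B : Set Ω, MeasurableSet B → B ⊆ A → μ B = 0 ∨ μ B = μ A

def deltaSet {E : Type*} [NormedAddCommGroup E] (x : E) (ε : ℝ) : Set E :=
  {y | ‖y‖ ≤ 1 ∧ 2 - ε ≤ ‖x - y‖}

lemma two_mul_min_add_abs_sub_le {c : ℝ} (hc : 0 ≤ c) (y : ℝ) :
    2 * min c y + |c - y| ≤ c + |y| := by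
  rcases le_total c y with h | h
  · rw [min_eq_left h, abs_sub_comm, abs_of_nonneg (sub_nonneg.2 h), abs_of_nonneg (hc.trans h)]
    linarith
  · rw [min_eq_right h, abs_of_nonneg (sub_nonneg.2 h)]
    linarith [le_abs_self y]

section

variable {Ω : Type*} [MeasurableSpace Ω] {μ : Measure Ω} {A : Set Ω}

lemma IsMeasureAtom.ae_restrict_or_ae_restrict_not (hA : IsMeasureAtom μ A) {p : Ω → Prop}
    (hp : MeasurableSet {x | p x}) :
    (∀ᵐ x ∂μ.restrict A, p x) ∨ ∀ᵐ x ∂μ.restrict A, ¬ p x := by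
  obtain ⟨hAm, -, hAtop, hatom⟩ := hA
  rw [ae_restrict_iff' hAm, ae_restrict_iff' hAm, ae_iff, ae_iff]
  rcases hatom _ (hAm.inter hp) Set.inter_subset_left with h | h
  · right
    simpa [Set.ofPred_and, Set.inter_comm] using h
  · left
    have := measure_inter_add_sdiff A hp (μ := μ)
    rw [h] at this
    have h0 : μ (A \ {x | p x}) = 0 := by
      simpa using (ENNReal.add_right_inj hAtop.ne).1 (this.trans (add_zero _).symm)
    simpa [Set.ofPred_and, Set.sdiff_eq, Set.inter_comm, Set.compl_ofPred] using h0

lemma IsMeasureAtom.setIntegral_eq_setIntegral_min (hA : IsMeasureAtom μ A) {g : Ω → ℝ}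
    (hg : Measurable g) {c : ℝ} (h : ∫ x in A, min c (g x) ∂μ < c * μ.real A) :
    ∫ x in A, g x ∂μ = ∫ x in A, min c (g x) ∂μ := by
  rcases hA.ae_restrict_or_ae_restrict_not (measurableSet_lt hg measurable_const) with hlt | hge
  · refine integral_congr_ae ?_
    filter_upwards [hlt] with x hx
    exact (min_eq_right hx.le).symm
  · have : ∫ x in A, min c (g x) ∂μ = c * μ.real A := by
      rw [integral_congr_ae (g := fun _ => c) ?_, setIntegral_const, smul_eq_mul, mul_comm]
      filter_upwards [hge] with x hx
      exact min_eq_left (not_lt.1 hx)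
    exact absurd this h.ne

lemma integral_abs_sub_add_two_mul_setIntegral_min_le {F G : Ω → ℝ} (hF : Integrable F μ)
    (hG : Integrable G μ) (hA : MeasurableSet A) (hμA : μ A ≠ ⊤) {c : ℝ} (hc : 0 ≤ c)
    (hFA : ∀ᵐ x ∂μ.restrict A, F x = c) :
    ∫ x, |F x - G x| ∂μ + 2 * ∫ x in A, min c (G x) ∂μ ≤ ∫ x, |F x| ∂μ + ∫ x, |G x| ∂μ := by
  have hconst : IntegrableOn (fun _ => c) A μ := integrableOn_const hμA
  have hmin : Integrable (fun x => 2 * A.indicator (fun x => min c (G x)) x) μ :=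
    (IntegrableOn.integrable_indicator (hconst.inf hG.integrableOn) hA).const_mul 2
  have hFG : Integrable (fun x => |F x - G x|) μ := (hF.sub hG).abs
  rw [← integral_indicator hA, ← integral_const_mul, ← integral_add hFG hmin,
    ← integral_add hF.abs hG.abs]
  refine integral_mono_ae (hFG.add hmin) (hF.abs.add hG.abs) ?_
  filter_upwards [(ae_restrict_iff' hA).1 hFA] with x hx
  by_cases hxA : x ∈ A
  · rw [Set.indicator_of_mem hxA, hx hxA, abs_of_nonneg hc, add_comm]
    exact two_mul_min_add_abs_sub_le hc (G x)
  · rw [Set.indicator_of_notMem hxA, mul_zero, add_zero]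
    exact abs_sub _ _

namespace MeasureTheory.L1

variable (μ A) in
noncomputable def setIntegralCLM : Lp ℝ 1 μ →L[ℝ] ℝ :=
  integralCLM.comp (LpToLpRestrictCLM Ω ℝ ℝ μ 1 A)

lemma setIntegralCLM_apply (g : Lp ℝ 1 μ) : setIntegralCLM μ A g = ∫ x in A, g x ∂μ := by
  rw [setIntegralCLM, ContinuousLinearMap.comp_apply, ← integral_def, integral_eq_integral]
  exact integral_congr_ae (LpToLpRestrictCLM_coeFn ℝ A g)

lemma norm_setIntegralCLM_le : ‖setIntegralCLM μ A‖ ≤ 1 :=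
  (ContinuousLinearMap.opNorm_comp_le _ _).trans <| mul_le_one₀ norm_Integral_le_one
    (norm_nonneg _) (LinearMap.mkContinuous_norm_le _ zero_le_one _)

lemma norm_sub_add_two_mul_setIntegral_min_le {f : Lp ℝ 1 μ} (g : Lp ℝ 1 μ)
    (hA : MeasurableSet A) (hμA : μ A ≠ ⊤) {c : ℝ} (hc : 0 ≤ c)
    (hfA : ∀ᵐ x ∂μ.restrict A, f x = c) :
    ‖f - g‖ + 2 * ∫ x in A, min c (g x) ∂μ ≤ ‖f‖ + ‖g‖ := by
  simp only [← dist_eq_norm, dist_eq_integral_dist, norm_eq_integral_norm, Real.dist_eq,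
    Real.norm_eq_abs]
  exact integral_abs_sub_add_two_mul_setIntegral_min_le (integrable_coeFn f)
    (integrable_coeFn g) hA hμA hc hfA

lemma setIntegral_le_of_mem_deltaSet {f g : Lp ℝ 1 μ} (hf : ‖f‖ = 1) (hA : IsMeasureAtom μ A)
    {c ε : ℝ} (hc : 0 ≤ c) (hfA : ∀ᵐ x ∂μ.restrict A, f x = c) (hε : ε < 2 * c * μ.real A)
    (hg : g ∈ deltaSet f ε) : ∫ x in A, g x ∂μ ≤ ε / 2 := by
  have hsplit := norm_sub_add_two_mul_setIntegral_min_le g hA.1 hA.2.2.1.ne hc hfA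
  have hmin_le : ∫ x in A, min c (g x) ∂μ ≤ ε / 2 := by linarith [hg.1, hg.2]
  rwa [hA.setIntegral_eq_setIntegral_min (Lp.stronglyMeasurable g).measurable (c := c)
    (by linarith)]

lemma closure_convexHull_deltaSet_subset {f : Lp ℝ 1 μ} (hf : ‖f‖ = 1)
    (hA : IsMeasureAtom μ A) {c ε : ℝ} (hc : 0 ≤ c) (hfA : ∀ᵐ x ∂μ.restrict A, f x = c)
    (hε : ε < 2 * c * μ.real A) :
    closure (convexHull ℝ (deltaSet f ε)) ⊆ setIntegralCLM μ A ⁻¹' Set.Iic (ε / 2) := by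
  refine closure_minimal (convexHull_min (fun g hg => ?_) ((convex_Iic _).linear_preimage
    (setIntegralCLM μ A).toLinearMap)) (isClosed_Iic.preimage (setIntegralCLM μ A).continuous)
  rw [Set.mem_preimage, Set.mem_Iic, setIntegralCLM_apply]
  exact setIntegral_le_of_mem_deltaSet hf hA hc hfA hε hg

end MeasureTheory.L1

end

theorem stmt_6_general {Ω : Type*} [MeasurableSpace Ω] (μ : Measure Ω)
    (f : Lp ℝ 1 μ) (hf : ‖f‖ = 1)
    (A : Set Ω) (hA : IsMeasureAtom μ A) (c : ℝ) (hc : 0 < c)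
    (hfA : ∀ᵐ x ∂(μ.restrict A), (f : Ω → ℝ) x = c)
    (ε : ℝ) (hε2 : ε < 2 * c * (μ A).toReal) :
    f ∉ closure (convexHull ℝ {g : Lp ℝ 1 μ | ‖g‖ ≤ 1 ∧ 2 - ε ≤ ‖f - g‖}) ∧
    ∀ h ∈ convexHull ℝ {g : Lp ℝ 1 μ | ‖g‖ ≤ 1 ∧ 2 - ε ≤ ‖f - g‖},
      (c - ε / (2 * (μ A).toReal)) * (μ A).toReal ≤ ‖f - h‖ := by
  simp only [← measureReal_def] at hε2 ⊢
  set φ := L1.setIntegralCLM μ A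
  have hφ : ∀ h ∈ closure (convexHull ℝ (deltaSet f ε)), φ h ≤ ε / 2 :=
    fun h hh => L1.closure_convexHull_deltaSet_subset hf hA hc.le hfA hε2 hh
  have hφf : φ f = c * μ.real A := by
    rw [L1.setIntegralCLM_apply, integral_congr_ae hfA, setIntegral_const, smul_eq_mul, mul_comm]
  have hμA : 0 < μ.real A := ENNReal.toReal_pos hA.2.1.ne' hA.2.2.1.ne
  refine ⟨fun hmem => ?_, fun h hh => ?_⟩
  · linarith [hφ f hmem]
  · calc (c - ε / (2 * μ.real A)) * μ.real A = φ f - ε / 2 := by rw [hφf]; field_simp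
      _ ≤ φ f - φ h := by linarith [hφ h (subset_closure hh)]
      _ = φ (f - h) := (map_sub φ f h).symm
      _ ≤ ‖f - h‖ :=
        (le_abs_self _).trans (by simpa using φ.le_of_opNorm_le L1.norm_setIntegralCLM_le (f - h))

/-- If the support of a norm-one `f ∈ L¹(μ)` contains an atom `A` (on which
`f = c` a.e. with `c > 0`), then `f` is not a Δ-point: for any
`0 < ε < 2cμ(A)`, `f` is not in the closed convex hull of `Δ_ε(f)`; moreover
any convex combination `h` of elements of `Δ_ε(f)` satisfies
`‖f - h‖ ≥ (c - ε/(2μ(A)))·μ(A)`. -/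
theorem stmt_6 {Ω : Type*} [MeasurableSpace Ω] (μ : Measure Ω) [SigmaFinite μ]
    (f : Lp ℝ 1 μ) (hf : ‖f‖ = 1)
    (A : Set Ω) (hA : IsMeasureAtom μ A) (c : ℝ) (hc : 0 < c)
    (hfA : ∀ᵐ x ∂(μ.restrict A), (f : Ω → ℝ) x = c)
    (ε : ℝ) (hε : 0 < ε) (hε2 : ε < 2 * c * (μ A).toReal) :
    f ∉ closure (convexHull ℝ {g : Lp ℝ 1 μ | ‖g‖ ≤ 1 ∧ 2 - ε ≤ ‖f - g‖}) ∧
    ∀ h ∈ convexHull ℝ {g : Lp ℝ 1 μ | ‖g‖ ≤ 1 ∧ 2 - ε ≤ ‖f - g‖},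
      (c - ε / (2 * (μ A).toReal)) * (μ A).toReal ≤ ‖f - h‖ :=
  stmt_6_general μ f hf A hA c hc hfA ε hε2
end

section
/- Let X be a real Banach space with the convex diametral local diameter two property (B_X = cl conv Δ, where Δ is the set of Δ-points of S_X). Then X has the local diameter two property: every slice of B_X has diameter 2. -/
/-!
The half-space `{f ≤ c}` is closed and convex, so if `f > c` somewhere on the closed convex hull
of a set, then `f > c` already somewhere on the set. Applied to `B_X = cl conv Δ` this puts a
Δ-point `x` in every slice; applied to `x ∈ cl conv Δ_δ(x)` it puts a point at distance
`≥ 2 - δ` from `x` in the same slice.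
-/

open Metric

def IsDeltaPoint {X : Type*} [NormedAddCommGroup X] [NormedSpace ℝ X] (x : X) : Prop :=
  ‖x‖ = 1 ∧ ∀ ε > (0 : ℝ), x ∈ closure (convexHull ℝ {y : X | ‖y‖ ≤ 1 ∧ 2 - ε ≤ ‖x - y‖})

theorem exists_mem_lt_apply_of_mem_closure_convexHull {E : Type*} [TopologicalSpace E]
    [AddCommGroup E] [Module ℝ E] (f : E →L[ℝ] ℝ) {s : Set E} {w : E} {c : ℝ}
    (hw : w ∈ closure (convexHull ℝ s)) (hc : c < f w) : ∃ y ∈ s, c < f y := by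
  by_contra! hs
  have hsub : closure (convexHull ℝ s) ⊆ {x | f x ≤ c} :=
    closure_minimal (convexHull_min hs (convex_halfSpace_le f.toLinearMap.isLinear c))
      (isClosed_le f.continuous continuous_const)
  exact (hsub hw).not_gt hc

theorem ContinuousLinearMap.exists_norm_lt_one_lt_apply {E : Type*} [NormedAddCommGroup E]
    [NormedSpace ℝ E] (f : E →L[ℝ] ℝ) {c : ℝ} (hc : c < ‖f‖) : ∃ z : E, ‖z‖ < 1 ∧ c < f z := by
  obtain ⟨z, hz, hfz⟩ := f.exists_lt_apply_of_lt_opNorm hc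
  rw [Real.norm_eq_abs] at hfz
  rcases le_or_gt 0 (f z) with h0 | h0
  · exact ⟨z, hz, by rwa [abs_of_nonneg h0] at hfz⟩
  · exact ⟨-z, by rwa [norm_neg], by rw [map_neg]; rwa [abs_of_neg h0] at hfz⟩

theorem IsDeltaPoint.exists_far_lt_apply {X : Type*} [NormedAddCommGroup X] [NormedSpace ℝ X]
    {x : X} (hx : IsDeltaPoint x) (f : X →L[ℝ] ℝ) {c : ℝ} (hc : c < f x) {δ : ℝ} (hδ : 0 < δ) :
    ∃ y : X, ‖y‖ ≤ 1 ∧ c < f y ∧ 2 - δ ≤ dist x y := by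
  obtain ⟨y, ⟨hy, hxy⟩, hfy⟩ := exists_mem_lt_apply_of_mem_closure_convexHull f (hx.2 δ hδ) hc
  exact ⟨y, hy, hfy, by rwa [dist_eq_norm]⟩

theorem exists_isDeltaPoint_lt_apply {X : Type*} [NormedAddCommGroup X] [NormedSpace ℝ X]
    (h : closedBall (0 : X) 1 = closure (convexHull ℝ {x : X | IsDeltaPoint x}))
    (f : X →L[ℝ] ℝ) {c : ℝ} (hc : c < ‖f‖) : ∃ x : X, IsDeltaPoint x ∧ c < f x := by
  obtain ⟨z, hz, hfz⟩ := f.exists_norm_lt_one_lt_apply hc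
  have hz_mem : z ∈ closure (convexHull ℝ {x : X | IsDeltaPoint x}) := by
    rw [← h]
    exact mem_closedBall_zero_iff.2 hz.le
  exact exists_mem_lt_apply_of_mem_closure_convexHull f hz_mem hfz

theorem le_diam_of_forall_exists_le_dist {α : Type*} [PseudoMetricSpace α] {s : Set α}
    (hs : Bornology.IsBounded s) {x : α} (hx : x ∈ s) {r : ℝ}
    (hfar : ∀ δ > 0, ∃ y ∈ s, r - δ ≤ dist x y) : r ≤ diam s := by
  refine le_of_forall_pos_le_add fun δ hδ => ?_
  obtain ⟨y, hy, hxy⟩ := hfar δ hδ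
  linarith [dist_le_diam_of_mem hs hx hy]

theorem stmt_16_general {X : Type*} [NormedAddCommGroup X] [NormedSpace ℝ X]
    (h : Metric.closedBall (0 : X) 1 =
      closure (convexHull ℝ
        {x : X | ‖x‖ = 1 ∧ ∀ ε > (0 : ℝ),
          x ∈ closure (convexHull ℝ {y : X | ‖y‖ ≤ 1 ∧ 2 - ε ≤ ‖x - y‖})})) :
    ∀ f : X →L[ℝ] ℝ, ‖f‖ = 1 → ∀ ε > (0 : ℝ),
      Metric.diam {x : X | ‖x‖ ≤ 1 ∧ 1 - ε < f x} = 2 := by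
  intro f hf ε hε
  have hsub : {x : X | ‖x‖ ≤ 1 ∧ 1 - ε < f x} ⊆ closedBall 0 1 :=
    fun x hx => mem_closedBall_zero_iff.2 hx.1
  obtain ⟨x, hx, hfx⟩ := exists_isDeltaPoint_lt_apply h f (c := 1 - ε) (by linarith)
  apply le_antisymm
  · calc diam _ ≤ diam (closedBall (0 : X) 1) := diam_mono hsub isBounded_closedBall
      _ ≤ 2 := by linarith [diam_closedBall (x := (0 : X)) zero_le_one]
  · refine le_diam_of_forall_exists_le_dist (isBounded_closedBall.subset hsub)
      ⟨hx.1.le, hfx⟩ fun δ hδ => ?_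
    obtain ⟨y, hy, hfy, hxy⟩ := hx.exists_far_lt_apply f hfx hδ
    exact ⟨y, ⟨hy, hfy⟩, hxy⟩

/-- If a real Banach space `X` has the convex diametral local diameter two
property (`B_X` is the closed convex hull of the set of Δ-points), then `X`
has the local diameter two property: every slice of `B_X` has diameter `2`. -/
theorem stmt_16 {X : Type*} [NormedAddCommGroup X] [NormedSpace ℝ X] [CompleteSpace X]
    (h : Metric.closedBall (0 : X) 1 =
      closure (convexHull ℝ
        {x : X | ‖x‖ = 1 ∧ ∀ ε > (0 : ℝ),
          x ∈ closure (convexHull ℝ {y : X | ‖y‖ ≤ 1 ∧ 2 - ε ≤ ‖x - y‖})})) :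
    ∀ f : X →L[ℝ] ℝ, ‖f‖ = 1 → ∀ ε > (0 : ℝ),
      Metric.diam {x : X | ‖x‖ ≤ 1 ∧ 1 - ε < f x} = 2 :=
  stmt_16_general h
end
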